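/- arXiv:2011.01090 — 2 statements merged into one kernel-verified Lean document; each statement's English description precedes it below -/
import Mathlib

section
/- With the unbiased estimator l̃_k(t) = M · (l_k(t) / Σ_{A : k ∈ A} P_A(t)) · 1{k = A₁(t)}, and meta-arm loss estimator l̃_A(t) = Σ_{k ∈ A} l̃_k(t), the conditional second moment satisfies E[(l̃_A(t))² | P(t)] = M · Σ_{k ∈ A} (l_k(t))² / (Σ_{B : k ∈ B ∈ 𝒦} P_B(t)). -/
open Finset

/-!
Since `l̃_k` vanishes unless `k = b`, the square of `l̃_A = ∑_{k ∈ A} l̃_k` has no cross terms: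
it equals `l̃_b²` when `b ∈ A` and `0` otherwise. Exchanging the order of summation, the
arm `k ∈ A` is then drawn with total weight `∑_{B ∋ k} P_B / M`, which cancels one factor of
`∑_{B ∋ k} P_B` in the denominator of `l̃_k²`.
-/

section

variable {α R : Type*} [DecidableEq α]

theorem sq_sum_mul_ite_eq [CommSemiring R] (A : Finset α) (f : α → R) (b : α) :
    (∑ k ∈ A, f k * (if k = b then 1 else 0)) ^ 2 = if b ∈ A then f b ^ 2 else 0 := by
  simp [ite_pow]

theorem sum_mul_sum_ite_mem_eq_sum_mul_sum_filter [CommSemiring R]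
    (𝒦 : Finset (Finset α)) (P : Finset α → R) (A : Finset α) (g : α → R) :
    ∑ B ∈ 𝒦, P B * ∑ b ∈ B, (if b ∈ A then g b else 0)
      = ∑ k ∈ A, g k * ∑ B ∈ 𝒦.filter (fun B => k ∈ B), P B := by
  simp_rw [sum_ite_mem, inter_comm _ A, ← sum_ite_mem A, mul_sum, sum_filter]
  rw [sum_comm]
  simp only [mul_ite, mul_zero, mul_comm]

end

theorem one_div_mul_mul_div_sq_mul (M x S : ℝ) : 1 / M * (M * x / S) ^ 2 * S = M * (x ^ 2 / S) := by
  rcases eq_or_ne M 0 with rfl | hM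
  · simp
  rcases eq_or_ne S 0 with rfl | hS
  · simp
  field_simp

theorem loss_estimator_second_moment_general
    (K M : ℕ)
    (P : Finset (Fin K) → ℝ) (l : Fin K → ℝ)
    (A : Finset (Fin K)) :
    ∑ B ∈ Finset.powersetCard M (univ : Finset (Fin K)), P B *
      ∑ b ∈ B, (1 / (M : ℝ)) *
        (∑ k ∈ A, (M : ℝ) * l k /
          (∑ B' ∈ (Finset.powersetCard M (univ : Finset (Fin K))).filter
            (fun B' => k ∈ B'), P B') * (if k = b then 1 else 0)) ^ 2
    = (M : ℝ) * ∑ k ∈ A, (l k) ^ 2 /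
        (∑ B ∈ (Finset.powersetCard M (univ : Finset (Fin K))).filter
          (fun B => k ∈ B), P B) := by
  set 𝒦 := powersetCard M (univ : Finset (Fin K))
  set S : Fin K → ℝ := fun k => ∑ B ∈ 𝒦.filter (fun B => k ∈ B), P B
  calc _ = ∑ B ∈ 𝒦, P B * ∑ b ∈ B, (if b ∈ A then 1 / (M : ℝ) * (M * l b / S b) ^ 2 else 0) := by
        simp only [sq_sum_mul_ite_eq]
        simp only [mul_ite, mul_zero, S]
    _ = ∑ k ∈ A, 1 / (M : ℝ) * (M * l k / S k) ^ 2 * S k :=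
        sum_mul_sum_ite_mem_eq_sum_mul_sum_filter 𝒦 P A _
    _ = _ := by
        rw [mul_sum]
        exact sum_congr rfl fun k _ => one_div_mul_mul_div_sq_mul _ _ _

/-- Conditional second moment of the meta-arm loss estimator:
`E[(l̃_A)² | P] = M · ∑_{k ∈ A} l_k² / (∑_{B ∋ k} P_B)`, where the random draw is a
meta-arm `B` with probability `P B` and `b` uniform in `B`, and
`l̃_k = M · l_k / (∑_{B' ∋ k} P_{B'}) · 1{k = b}`. -/
theorem loss_estimator_second_moment
    (K M : ℕ) (hM : 1 ≤ M) (hMK : M ≤ K)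
    (P : Finset (Fin K) → ℝ) (l : Fin K → ℝ)
    (hPnonneg : ∀ A, 0 ≤ P A)
    (hPsum : ∑ A ∈ Finset.powersetCard M (univ : Finset (Fin K)), P A = 1)
    (hl : ∀ k, 0 ≤ l k ∧ l k ≤ 1)
    (hpos : ∀ k : Fin K, 0 < ∑ B ∈ (Finset.powersetCard M (univ : Finset (Fin K))).filter
      (fun B => k ∈ B), P B)
    (A : Finset (Fin K)) (hA : A ∈ Finset.powersetCard M (univ : Finset (Fin K))) :
    ∑ B ∈ Finset.powersetCard M (univ : Finset (Fin K)), P B *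
      ∑ b ∈ B, (1 / (M : ℝ)) *
        (∑ k ∈ A, (M : ℝ) * l k /
          (∑ B' ∈ (Finset.powersetCard M (univ : Finset (Fin K))).filter
            (fun B' => k ∈ B'), P B') * (if k = b then 1 else 0)) ^ 2
    = (M : ℝ) * ∑ k ∈ A, (l k) ^ 2 /
        (∑ B ∈ (Finset.powersetCard M (univ : Finset (Fin K))).filter
          (fun B => k ∈ B), P B) :=
  loss_estimator_second_moment_general K M P l A
end

section
/- Suppose an adversary has a total budget of at most V ones on each arm (global attackability), communication uses codewords requiring at least k corrupted bits for a successful attack, there are M players, and each successful attack on a communication phase causes an exploration loss of at most M·τ. Then the total exploration loss caused by failed communications is at most M²·V·τ/k. -/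
open Finset

theorem mul_sum_le_card_mul {ι : Type*} [Fintype ι] (k V : ℕ) (a : ι → ℕ)
    (h : ∀ i, k * a i ≤ V) :
    k * ∑ i, a i ≤ Fintype.card ι * V :=
  calc k * ∑ i, a i = ∑ i, k * a i := mul_sum ..
    _ ≤ ∑ _i : ι, V := sum_le_sum fun i _ => h i
    _ = Fintype.card ι * V := by simp

theorem cast_sum_le_card_mul_div {ι : Type*} [Fintype ι] (k V : ℕ) (hk : 0 < k) (a : ι → ℕ)
    (h : ∀ i, k * a i ≤ V) :
    ((∑ i, a i : ℕ) : ℝ) ≤ Fintype.card ι * V / k := by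
  rw [le_div_iff₀ (by exact_mod_cast hk), mul_comm]
  exact_mod_cast mul_sum_le_card_mul k V a h

/-- Global-attackability error regret: if each of `M` communication arms has
attack budget at most `V` ones, each successful attack consumes at least `k` ones,
and each successful attack causes at most `M·τ` exploration loss, then the total
exploration loss caused by failed communications is at most `M²·V·τ/k`. -/
theorem global_attack_error_regret
    (M V k τ : ℕ) (hk : 1 ≤ k)
    (attacks budget : Fin M → ℕ)
    (hbudget : ∀ m, budget m ≤ V)
    (hcost : ∀ m, k * attacks m ≤ budget m) :
    ((∑ m : Fin M, attacks m : ℕ) : ℝ) * ((M : ℝ) * τ)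
      ≤ (M : ℝ) ^ 2 * V * τ / k := by
  have hattacks : ((∑ m : Fin M, attacks m : ℕ) : ℝ) ≤ M * V / k := by
    simpa using cast_sum_le_card_mul_div k V hk attacks fun m => (hcost m).trans (hbudget m)
  calc ((∑ m : Fin M, attacks m : ℕ) : ℝ) * ((M : ℝ) * τ)
      ≤ (M * V / k : ℝ) * (M * τ) := by gcongr
    _ = (M : ℝ) ^ 2 * V * τ / k := by ring
end
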